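/- arXiv:2202.08445 — 8 statements merged into one kernel-verified Lean document; each statement's English description precedes it below -/
import Mathlib

section
/- Every finite simple graph G admits a proper vertex coloring using vi(G) colors; that is, the chromatic number of G is at most its vertex integrity. -/
open SimpleGraph

/-- `S` is a vi(k)-set of the graph `G`: every connected component of the subgraph
induced by the complement of `S` has at most `k - |S|` vertices (and `|S| ≤ k`). -/
def IsVISet {V : Type*} (G : SimpleGraph V) (k : ℕ) (S : Finset V) : Prop :=
  S.card ≤ k ∧
    ∀ c : (G.induce {v : V | v ∉ S}).ConnectedComponent,
      Nat.card c.supp ≤ k - S.card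

/-- The vertex integrity of `G`: the minimum `k` such that `G` has a vi(k)-set. -/
noncomputable def vertexIntegrity {V : Type*} [Fintype V] (G : SimpleGraph V) : ℕ :=
  sInf {k : ℕ | ∃ S : Finset V, IsVISet G k S}

/-!
Take a vi-set `S` realising `k = vi(G)`. Give the vertices of `S` pairwise distinct colours,
and colour `G - S` with `k - |S|` further colours: this is possible component by component,
since each component of `G - S` has at most `k - |S|` vertices.
-/

namespace SimpleGraph

variable {V : Type*} {G : SimpleGraph V}

theorem colorable_of_forall_card_connectedComponent_le [Finite V] {n : ℕ}
    (h : ∀ c : G.ConnectedComponent, Nat.card c.supp ≤ n) : G.Colorable n := by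
  rw [colorable_iff_forall_connectedComponent]
  intro c
  have := Fintype.ofFinite c
  exact (colorable_of_fintype _).mono (by rw [← Nat.card_eq_fintype_card]; exact h c)

theorem Colorable.add_of_induce_compl {s : Set V} {m n : ℕ} (hs : (G.induce s).Colorable m)
    (hsc : (G.induce sᶜ).Colorable n) : G.Colorable (m + n) := by
  classical
  obtain ⟨C₁⟩ := hs
  obtain ⟨C₂⟩ := hsc
  let C : G.Coloring (Fin m ⊕ Fin n) := Coloring.mk
    (fun v => if hv : v ∈ s then .inl (C₁ ⟨v, hv⟩) else .inr (C₂ ⟨v, hv⟩))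
    (fun {u v} huv => by
      by_cases hu : u ∈ s <;> by_cases hv : v ∈ s <;> simp only [hu, hv, dite_true, dite_false,
        ne_eq, Sum.inl.injEq, Sum.inr.injEq, reduceCtorEq, not_false_eq_true]
      · exact C₁.valid huv
      · exact C₂.valid huv)
  simpa using C.colorable

end SimpleGraph

theorem exists_isVISet_vertexIntegrity {V : Type*} [Fintype V] (G : SimpleGraph V) :
    ∃ S, IsVISet G (vertexIntegrity G) S := by
  refine Nat.sInf_mem (s := {k | ∃ S, IsVISet G k S})
    ⟨Fintype.card V, Finset.univ, by simp, fun c => ?_⟩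
  obtain ⟨v, -⟩ := c.exists_rep
  exact absurd (Finset.mem_univ v.1) v.2

/-- Every finite simple graph admits a proper vertex coloring with `vi(G)` colors;
that is, its chromatic number is at most its vertex integrity. -/
theorem stmt_0 {V : Type*} [Fintype V] (G : SimpleGraph V) :
    G.Colorable (vertexIntegrity G) ∧
      G.chromaticNumber ≤ (vertexIntegrity G : ℕ∞) := by
  obtain ⟨S, hS, hcomponents⟩ := exists_isVISet_vertexIntegrity G
  have hcol : G.Colorable (S.card + (vertexIntegrity G - S.card)) :=
    Colorable.add_of_induce_compl (s := ↑S) (by simpa using colorable_of_fintype (G.induce ↑S))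
      (colorable_of_forall_card_connectedComponent_le hcomponents)
  rw [Nat.add_sub_cancel' hS] at hcol
  exact ⟨hcol, hcol.chromaticNumber_le⟩
end

section
/- For every finite simple graph G, the treedepth of G is at most the vertex integrity of G: td(G) ≤ vi(G). -/
open SimpleGraph

open Classical in
/-- The set of vertices of `A` lying in the same connected component as `w`
in the subgraph of `G` induced by `A`. -/
noncomputable def compIn {V : Type*} [Fintype V] [DecidableEq V]
    (G : SimpleGraph V) (A : Finset V) (w : V) : Finset V :=
  A.filter fun u =>
    ∃ (hw : w ∈ (A : Set V)) (hu : u ∈ (A : Set V)),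
      (G.induce (A : Set V)).Reachable ⟨w, hw⟩ ⟨u, hu⟩

lemma mem_compIn_self {V : Type*} [Fintype V] [DecidableEq V]
    (G : SimpleGraph V) (A : Finset V) (w : V) (hw : w ∈ A) :
    w ∈ compIn G A w := by
  classical
  simp only [compIn, Finset.mem_filter]
  exact ⟨hw, hw, hw, Reachable.refl _⟩

lemma compIn_subset {V : Type*} [Fintype V] [DecidableEq V]
    (G : SimpleGraph V) (A : Finset V) (w : V) :
    compIn G A w ⊆ A := by
  intro u hu
  simp only [compIn, Finset.mem_filter] at hu
  exact hu.1

/-- Treedepth of the subgraph of `G` induced by the vertex set `A`, defined by the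
standard recursion: it is `0` on the empty set, `1` on a single vertex, the maximum
of the treedepths of the connected components if the induced graph is disconnected,
and `1 + min over vertex deletions` if it is connected with at least two vertices.
(All cases are captured by the single equation below: the maximum over all connected
components `C` of `1 + min_{v ∈ C} td(C − v)`.) -/
noncomputable def treedepthOn {V : Type*} [Fintype V] [DecidableEq V]
    (G : SimpleGraph V) (A : Finset V) : ℕ :=
  A.attach.sup fun w =>
    1 + (compIn G A w.1).attach.inf'
      (Finset.attach_nonempty_iff.mpr ⟨w.1, mem_compIn_self G A w.1 w.2⟩)
      (fun v => treedepthOn G ((compIn G A w.1).erase v.1))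
termination_by A.card
decreasing_by
  exact lt_of_lt_of_le (Finset.card_erase_lt_of_mem v.2)
    (Finset.card_le_card (compIn_subset G A w.1))


lemma treedepthOn_le_card {V : Type*} [Fintype V] [DecidableEq V]
    (G : SimpleGraph V) (A : Finset V) : treedepthOn G A ≤ A.card := by
  rw [treedepthOn]
  apply Finset.sup_le
  rintro ⟨w, hw⟩ -
  calc 1 + _ ≤ 1 + treedepthOn G ((compIn G A w).erase w) := by
        apply Nat.add_le_add_left
        exact Finset.inf'_le _ (Finset.mem_attach _ ⟨w, mem_compIn_self G A w hw⟩)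
    _ ≤ 1 + ((compIn G A w).erase w).card := by
        have := treedepthOn_le_card G ((compIn G A w).erase w)
        omega
    _ ≤ A.card := by
        have h2 := Finset.card_erase_lt_of_mem (mem_compIn_self G A w hw)
        have h3 := Finset.card_le_card (compIn_subset G A w)
        omega
termination_by A.card
decreasing_by
  exact lt_of_lt_of_le (Finset.card_erase_lt_of_mem (mem_compIn_self G A w hw))
    (Finset.card_le_card (compIn_subset G A w))

lemma reachable_induce_of_support {V : Type*} (G : SimpleGraph V) {s t : Set V}
    (hst : s ⊆ t) : ∀ {a b : ↥t} (p : (G.induce t).Walk a b),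
    (∀ x ∈ p.support, (x : V) ∈ s) →
    ∃ (ha : (a : V) ∈ s) (hb : (b : V) ∈ s), (G.induce s).Reachable ⟨a, ha⟩ ⟨b, hb⟩ := by
  intro a b p
  induction p with
  | nil =>
    intro h
    exact ⟨h _ (by simp), h _ (by simp), Reachable.refl _⟩
  | @cons u v w h p ih =>
    intro hsupp
    have hu : (u : V) ∈ s := hsupp u (by simp)
    have hrest : ∀ x ∈ p.support, (x : V) ∈ s := fun x hx =>
      hsupp x (by simp [SimpleGraph.Walk.support_cons, hx])
    obtain ⟨hv, hw, hreach⟩ := ih hrest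
    refine ⟨hu, hw, Reachable.trans (SimpleGraph.Adj.reachable ?_) hreach⟩
    have h' : G.Adj (u : V) (v : V) := h
    exact h'

lemma support_mem_compIn {V : Type*} [Fintype V] [DecidableEq V]
    (G : SimpleGraph V) (A : Finset V) (w : V) (hw : w ∈ A) {u : ↥(A : Set V)}
    (p : (G.induce (A : Set V)).Walk ⟨w, hw⟩ u) :
    ∀ x ∈ p.support, (x : V) ∈ compIn G A w := by
  classical
  intro x hx
  simp only [compIn, Finset.mem_filter]
  refine ⟨x.2, hw, x.2, ?_⟩
  have := p.takeUntil x hx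
  exact ⟨this.copy rfl (Subtype.eta _ _).symm⟩

lemma compIn_card_le {V : Type*} [Fintype V] [DecidableEq V]
    (G : SimpleGraph V) (S : Finset V) (m : ℕ)
    (hS : ∀ c : (G.induce {v : V | v ∉ S}).ConnectedComponent, Nat.card c.supp ≤ m)
    (A : Finset V) (w : V) (hw : w ∈ A)
    (hdisj : ∀ u ∈ compIn G A w, u ∉ S) :
    (compIn G A w).card ≤ m := by
  classical
  set T : Set V := {v : V | v ∉ S} with hT
  have hwT : w ∈ T := hdisj w (mem_compIn_self G A w hw)
  have key : ∀ u ∈ compIn G A w, ∃ (huT : u ∈ T),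
      (G.induce T).Reachable ⟨w, hwT⟩ ⟨u, huT⟩ := by
    intro u hu
    have huT : u ∈ T := hdisj u hu
    refine ⟨huT, ?_⟩
    have hu' := hu
    simp only [compIn, Finset.mem_filter] at hu'
    obtain ⟨huA, hw', hu'', hreach⟩ := hu'
    obtain ⟨p⟩ := hreach
    have hsupp := support_mem_compIn G A w hw' p
    have hsub : ((compIn G A w : Finset V) : Set V) ⊆ (A : Set V) := by
      exact_mod_cast compIn_subset G A w
    obtain ⟨ha, hb, hreach'⟩ := reachable_induce_of_support G hsub p
      (fun x hx => by exact_mod_cast hsupp x hx)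
    have hsubT : ((compIn G A w : Finset V) : Set V) ⊆ T := fun x hx =>
      hdisj x (by exact_mod_cast hx)
    have := hreach'.map (G.induceHomOfLE hsubT).toHom
    exact this
  set c := (G.induce T).connectedComponentMk ⟨w, hwT⟩ with hc
  have hinj : ∃ f : ↥(compIn G A w : Finset V) → ↥c.supp, Function.Injective f := by
    refine ⟨fun u => ⟨⟨u.1, (key u.1 u.2).1⟩, ?_⟩, ?_⟩
    · rw [ConnectedComponent.mem_supp_iff, hc]
      exact ConnectedComponent.sound (key u.1 u.2).2.symm
    · intro x y hxy
      apply Subtype.ext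
      exact congrArg (fun z => z.1.1) hxy
  obtain ⟨f, hf⟩ := hinj
  have h1 : (compIn G A w).card = Nat.card ↥(compIn G A w : Finset V) := by
    rw [Nat.card_eq_fintype_card, Fintype.card_coe]
  rw [h1]
  exact le_trans (Nat.card_le_card_of_injective f hf) (hS c)

lemma treedepthOn_le_key {V : Type*} [Fintype V] [DecidableEq V]
    (G : SimpleGraph V) (S : Finset V) (m : ℕ)
    (hS : ∀ c : (G.induce {v : V | v ∉ S}).ConnectedComponent, Nat.card c.supp ≤ m)
    (A : Finset V) : treedepthOn G A ≤ (A ∩ S).card + m := by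
  classical
  rw [treedepthOn]
  apply Finset.sup_le
  rintro ⟨w, hw⟩ -
  by_cases hcase : ∃ v ∈ compIn G A w, v ∈ S
  · obtain ⟨v, hvC, hvS⟩ := hcase
    calc 1 + _ ≤ 1 + treedepthOn G ((compIn G A w).erase v) := by
          apply Nat.add_le_add_left
          exact Finset.inf'_le _ (Finset.mem_attach _ ⟨v, hvC⟩)
      _ ≤ 1 + ((((compIn G A w).erase v) ∩ S).card + m) := by
          have := treedepthOn_le_key G S m hS ((compIn G A w).erase v)
          omega
      _ ≤ (A ∩ S).card + m := by
          have hsub : ((compIn G A w).erase v) ∩ S ⊆ (A ∩ S).erase v := by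
            intro x hx
            simp only [Finset.mem_inter, Finset.mem_erase] at hx ⊢
            exact ⟨hx.1.1, compIn_subset G A w hx.1.2, hx.2⟩
          have h1 := Finset.card_le_card hsub
          have h2 : v ∈ A ∩ S := Finset.mem_inter.mpr ⟨compIn_subset G A w hvC, hvS⟩
          have h3 := Finset.card_erase_lt_of_mem h2
          omega
  · push_neg at hcase
    calc 1 + _ ≤ 1 + treedepthOn G ((compIn G A w).erase w) := by
          apply Nat.add_le_add_left
          exact Finset.inf'_le _ (Finset.mem_attach _ ⟨w, mem_compIn_self G A w hw⟩)
      _ ≤ 1 + ((compIn G A w).erase w).card :=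
          Nat.add_le_add_left (treedepthOn_le_card G _) _
      _ ≤ (compIn G A w).card := by
          have := Finset.card_erase_lt_of_mem (mem_compIn_self G A w hw)
          omega
      _ ≤ m := compIn_card_le G S m hS A w hw hcase
      _ ≤ (A ∩ S).card + m := Nat.le_add_left _ _
termination_by A.card
decreasing_by
  exact lt_of_lt_of_le (Finset.card_erase_lt_of_mem hvC)
    (Finset.card_le_card (compIn_subset G A w))

/-- The treedepth of a finite simple graph `G`. -/
noncomputable def treedepth {V : Type*} [Fintype V] [DecidableEq V]
    (G : SimpleGraph V) : ℕ :=
  treedepthOn G Finset.univ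

/-- The treedepth of a finite simple graph is at most its vertex integrity. -/
theorem stmt_1 {V : Type*} [Fintype V] [DecidableEq V] (G : SimpleGraph V) :
    treedepth G ≤ vertexIntegrity G := by
  classical
  have hne : {k : ℕ | ∃ S : Finset V, IsVISet G k S}.Nonempty := by
    refine ⟨Fintype.card V, Finset.univ, Finset.card_le_univ _, fun c => ?_⟩
    obtain ⟨u, -⟩ := c.exists_rep
    exact absurd u.2 (by simp)
  have hmem : ∃ S : Finset V, IsVISet G (vertexIntegrity G) S := Nat.sInf_mem hne
  obtain ⟨S, hcard, hcomp⟩ := hmem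
  have := treedepthOn_le_key G S (vertexIntegrity G - S.card) hcomp Finset.univ
  rw [Finset.univ_inter] at this
  show treedepthOn G Finset.univ ≤ vertexIntegrity G
  omega
end

section
/- Let G = (V, E) be a finite simple graph and let G′ be the graph obtained from G by adding, for every edge e = {u, w} ∈ E, a new vertex v_e adjacent to both u and w, while keeping all original edges of G. If S ⊆ V is a vi(k)-set of G, then S is a vi(k²)-set of G′. In particular, if vi(G) = k then vi(G′) ≤ k². -/
open SimpleGraph

/-- The graph `G'` obtained from `G` by adding, for every edge `e = {u,w}` of `G`,
a new vertex `v_e` adjacent to both `u` and `w`, while keeping all original edges. -/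
def addEdgeVertices {V : Type*} (G : SimpleGraph V) : SimpleGraph (V ⊕ G.edgeSet) where
  Adj x y :=
    match x, y with
    | Sum.inl u, Sum.inl v => G.Adj u v
    | Sum.inl u, Sum.inr e => u ∈ (e : Sym2 V)
    | Sum.inr e, Sum.inl u => u ∈ (e : Sym2 V)
    | Sum.inr _, Sum.inr _ => False
  symm := by
    constructor
    rintro (u | e) (v | f) h
    · exact G.adj_symm h
    · exact h
    · exact h
    · exact h.elim
  loopless := by
    constructor
    rintro (u | e) h
    · exact G.irrefl h
    · exact h

/-! Let `T` be the union of the footprints of the vertices of a component `c` of `G' - S`, the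
footprint of `u` being `u` and that of `v_e` the two ends of `e`. A walk in `G' - S` shadows a
walk in `G - S`, so `T \ S` lies in a single component of `G - S`; hence `|T \ S| ≤ k - |S|` and
`|T| ≤ k`. The original vertices of `c` lie in `T \ S` and its edge vertices are edges of `G`
inside `T`, so `|c| ≤ (k - |S|) + (k choose 2) ≤ k² - |S|`. -/

lemma Nat.choose_two_add_self_le_sq (n : ℕ) : n.choose 2 + n ≤ n ^ 2 := by
  rw [Nat.choose_two_right]
  rcases n with _ | n
  · simp
  · have := Nat.div_le_self ((n + 1) * n) 2
    simp only [Nat.add_sub_cancel]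
    nlinarith

namespace addEdgeVertices

variable {V : Type*} {G : SimpleGraph V} {S : Finset V}

def footprint (G : SimpleGraph V) : V ⊕ G.edgeSet → Set V
  | .inl u => {u}
  | .inr e => {u | u ∈ (e : Sym2 V)}

lemma eq_or_adj_of_mem_footprint {a : V ⊕ G.edgeSet} {u v : V} (hu : u ∈ footprint G a)
    (hv : v ∈ footprint G a) : u = v ∨ G.Adj u v := by
  rcases a with a | e
  · exact .inl (hu.trans hv.symm)
  · by_cases huv : u = v
    · exact .inl huv
    · rw [← G.mem_edgeSet, ← (Sym2.mem_and_mem_iff huv).1 ⟨hu, hv⟩]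
      exact .inr e.2

lemma reachable_induce_of_eq_or_adj {u v : V} (hu : u ∉ S) (hv : v ∉ S)
    (h : u = v ∨ G.Adj u v) : (G.induce {w | w ∉ S}).Reachable ⟨u, hu⟩ ⟨v, hv⟩ := by
  rcases h with rfl | h
  · rfl
  · exact Adj.reachable (induce_adj.2 h)

lemma exists_reachable_mem_footprint_of_adj {a b : V ⊕ G.edgeSet}
    (hab : (addEdgeVertices G).Adj a b) (hb : b ∉ S.map ⟨Sum.inl, Sum.inl_injective⟩) {u : V}
    (hua : u ∈ footprint G a) (hu : u ∉ S) :
    ∃ w ∈ footprint G b, ∃ hw : w ∉ S,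
      (G.induce {w | w ∉ S}).Reachable ⟨u, hu⟩ ⟨w, hw⟩ := by
  rcases a with a | e <;> rcases b with b | f
  · obtain rfl : u = a := hua
    have hbS : b ∉ S := by simpa using hb
    exact ⟨b, rfl, hbS, reachable_induce_of_eq_or_adj hu hbS (.inr hab)⟩
  · obtain rfl : u = a := hua
    exact ⟨u, hab, hu, .rfl⟩
  · have hbS : b ∉ S := by simpa using hb
    exact ⟨b, rfl, hbS, reachable_induce_of_eq_or_adj hu hbS
      (eq_or_adj_of_mem_footprint (a := .inr e) hua hab)⟩
  · exact hab.elim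

lemma reachable_of_reachable_of_mem_footprint
    {a b : {x : V ⊕ G.edgeSet | x ∉ S.map ⟨Sum.inl, Sum.inl_injective⟩}}
    (hab : ((addEdgeVertices G).induce
      {x | x ∉ S.map ⟨Sum.inl, Sum.inl_injective⟩}).Reachable a b)
    {u v : V} (hua : u ∈ footprint G a) (hvb : v ∈ footprint G b) (hu : u ∉ S)
    (hv : v ∉ S) :
    (G.induce {w | w ∉ S}).Reachable ⟨u, hu⟩ ⟨v, hv⟩ := by
  obtain ⟨p⟩ := hab
  induction p generalizing u with
  | nil => exact reachable_induce_of_eq_or_adj hu hv (eq_or_adj_of_mem_footprint hua hvb)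
  | @cons _ x _ hax _ ih =>
    obtain ⟨w, hwx, hw, huw⟩ := exists_reachable_mem_footprint_of_adj hax x.2 hua hu
    exact huw.trans (ih hwx hvb hw)

lemma ncard_edges_subset_le_choose_two [Finite V] (T : Set V) :
    {e : G.edgeSet | ∀ u ∈ (e : Sym2 V), u ∈ T}.ncard ≤ T.ncard.choose 2 := by
  classical
  have := Fintype.ofFinite V
  let f : {e : G.edgeSet | ∀ u ∈ (e : Sym2 V), u ∈ T} → {p : Sym2 T // ¬ p.IsDiag} :=
    fun e => ⟨(e.1 : Sym2 V).attachWith e.2, fun h =>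
      G.not_isDiag_of_mem_edgeSet e.1.2 (by simpa using h.map (f := Subtype.val))⟩
  have hf : Function.Injective f := by
    intro e e' h
    have := congrArg (fun p => (p.1 : Sym2 T).map Subtype.val) h
    simp only [f, Sym2.attachWith_map_subtypeVal] at this
    exact Subtype.ext (Subtype.ext this)
  calc _ ≤ Nat.card {p : Sym2 T // ¬ p.IsDiag} := Nat.card_le_card_of_injective f hf
    _ = T.ncard.choose 2 := by
      rw [Nat.card_eq_fintype_card, Sym2.card_subtype_not_diag, ← Nat.card_eq_fintype_card,
        Nat.card_coe_set_eq]

lemma ncard_le_ncard_preimage_inl_add_choose_two [Finite V] (X : Set (V ⊕ G.edgeSet))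
    (T : Set V) (hX : ∀ x ∈ X, footprint G x ⊆ T) :
    X.ncard ≤ (Sum.inl ⁻¹' X).ncard + T.ncard.choose 2 := by
  have hsplit : X = Sum.inl '' (Sum.inl ⁻¹' X) ∪ Sum.inr '' (Sum.inr ⁻¹' X) := by
    ext (x | e) <;> simp
  have hinr : Sum.inr ⁻¹' X ⊆ {e : G.edgeSet | ∀ u ∈ (e : Sym2 V), u ∈ T} :=
    fun e he _ hu => hX _ he hu
  calc X.ncard = (Sum.inl '' (Sum.inl ⁻¹' X) ∪ Sum.inr '' (Sum.inr ⁻¹' X)).ncard := by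
        rw [← hsplit]
    _ ≤ (Sum.inl '' (Sum.inl ⁻¹' X)).ncard + (Sum.inr '' (Sum.inr ⁻¹' X)).ncard :=
        Set.ncard_union_le _ _
    _ = (Sum.inl ⁻¹' X).ncard + (Sum.inr ⁻¹' X).ncard := by
        rw [Set.ncard_image_of_injective _ Sum.inl_injective,
          Set.ncard_image_of_injective _ Sum.inr_injective]
    _ ≤ _ := Nat.add_le_add_left
        ((Set.ncard_le_ncard hinr).trans (ncard_edges_subset_le_choose_two T)) _

end addEdgeVertices

open addEdgeVertices

lemma IsVISet.ncard_le_of_reachable {V : Type*} [Finite V] {G : SimpleGraph V} {k : ℕ}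
    {S : Finset V} (hS : IsVISet G k S) {R : Set V} (hRS : ∀ u ∈ R, u ∉ S)
    (hR : ∀ u (hu : u ∈ R) v (hv : v ∈ R),
      (G.induce {w | w ∉ S}).Reachable ⟨u, hRS u hu⟩ ⟨v, hRS v hv⟩) :
    R.ncard ≤ k - S.card := by
  rcases R.eq_empty_or_nonempty with rfl | ⟨u₀, hu₀⟩
  · simp
  let C := (G.induce {w | w ∉ S}).connectedComponentMk ⟨u₀, hRS u₀ hu₀⟩
  let f : R → C.supp := fun u => ⟨⟨u, hRS u u.2⟩,
    (ConnectedComponent.mem_supp_iff _ _).2 (ConnectedComponent.sound (hR _ u.2 _ hu₀))⟩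
  have hf : Function.Injective f := fun u v h => Subtype.ext (congrArg (·.1.1) h)
  exact (Nat.card_le_card_of_injective f hf).trans (hS.2 C)

theorem IsVISet.addEdgeVertices_map_inl {V : Type*} [Finite V] {G : SimpleGraph V} {k : ℕ}
    {S : Finset V} (hS : IsVISet G k S) :
    IsVISet (addEdgeVertices G) (k ^ 2) (S.map ⟨Sum.inl, Sum.inl_injective⟩) := by
  refine ⟨?_, fun c => ?_⟩
  · rw [Finset.card_map]
    exact hS.1.trans (Nat.le_self_pow two_ne_zero k)
  rw [Finset.card_map]
  set X : Set (V ⊕ G.edgeSet) := Subtype.val '' c.supp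
  set T : Set V := ⋃ x ∈ X, footprint G x
  have hreach : ∀ u (hu : u ∈ T \ S) v (hv : v ∈ T \ S),
      (G.induce {w | w ∉ S}).Reachable ⟨u, hu.2⟩ ⟨v, hv.2⟩ := by
    rintro u ⟨hu, -⟩ v ⟨hv, -⟩
    obtain ⟨_, ⟨a, ha, rfl⟩, hua⟩ := Set.mem_iUnion₂.1 hu
    obtain ⟨_, ⟨b, hb, rfl⟩, hvb⟩ := Set.mem_iUnion₂.1 hv
    exact reachable_of_reachable_of_mem_footprint
      (ConnectedComponent.exact (ha.trans hb.symm)) hua hvb _ _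
  have hTS : (T \ S).ncard ≤ k - S.card := hS.ncard_le_of_reachable (fun _ hu => hu.2) hreach
  have hT : T.ncard ≤ k := by
    have := Set.ncard_le_ncard_sdiff_add_ncard T S
    rw [Set.ncard_coe_finset] at this
    have := hS.1
    omega
  have hinl : Sum.inl ⁻¹' X ⊆ T \ S := by
    rintro u ⟨a, ha, hau⟩
    have huS : u ∉ S := by simpa [hau] using a.2
    exact ⟨Set.mem_biUnion ⟨a, ha, hau⟩ (by simp [footprint]), huS⟩
  calc Nat.card c.supp = X.ncard := (Set.ncard_image_of_injective _ Subtype.val_injective).symm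
    _ ≤ (Sum.inl ⁻¹' X).ncard + T.ncard.choose 2 :=
        ncard_le_ncard_preimage_inl_add_choose_two X T fun x hx => Set.subset_biUnion_of_mem hx
    _ ≤ (k - S.card) + k.choose 2 :=
        Nat.add_le_add ((Set.ncard_le_ncard hinl).trans hTS) (Nat.choose_le_choose 2 hT)
    _ ≤ k ^ 2 - S.card := by
        have := Nat.choose_two_add_self_le_sq k
        have := hS.1
        omega

theorem stmt_4_general {V : Type*} [Fintype V] (G : SimpleGraph V)
    [DecidableRel G.Adj] (k : ℕ) (S : Finset V) (hS : IsVISet G k S) :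
    IsVISet (addEdgeVertices G) (k ^ 2) (S.map ⟨Sum.inl, Sum.inl_injective⟩) ∧
      (vertexIntegrity G = k → vertexIntegrity (addEdgeVertices G) ≤ k ^ 2) := by
  have h := hS.addEdgeVertices_map_inl
  exact ⟨h, fun _ => Nat.sInf_le ⟨_, h⟩⟩

/-- If `S` is a vi(k)-set of `G`, then `S` (viewed inside `G'`) is a vi(k²)-set of
the graph `G'` obtained by adding a vertex `v_e` for each edge `e`.
In particular, if `vi(G) = k` then `vi(G') ≤ k²`. -/
theorem stmt_4 {V : Type*} [Fintype V] [DecidableEq V] (G : SimpleGraph V)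
    [DecidableRel G.Adj] (k : ℕ) (S : Finset V) (hS : IsVISet G k S) :
    IsVISet (addEdgeVertices G) (k ^ 2) (S.map ⟨Sum.inl, Sum.inl_injective⟩) ∧
      (vertexIntegrity G = k → vertexIntegrity (addEdgeVertices G) ≤ k ^ 2) :=
  stmt_4_general G k S hS
end

section
/- Let (G, C) be a p-colored finite simple graph and let S be a vi(k)-set of G. Then the number of equivalence classes of connected components of G − S under the same-(G,S)-type relation is at most (k+1) · 2^{k² + pk}; in particular it is bounded by a function of k and p only. -/
open SimpleGraph

/-- The vertex set (inside `V`) of a connected component `c` of `G − S`. -/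
def suppSet {V : Type*} (G : SimpleGraph V) (S : Finset V)
    (c : (G.induce {v : V | v ∉ S}).ConnectedComponent) : Set V :=
  Subtype.val '' c.supp

/-- Two connected components of `G − S` have the same `(G,S)`-type: there is a graph
isomorphism between the subgraphs of `G` induced by `S ∪ V(A₁)` and `S ∪ V(A₂)` which
fixes `S` pointwise and preserves the color sets given by the `p`-color list `C`. -/
def SameType {V : Type*} (G : SimpleGraph V) {p : ℕ} (C : Fin p → Set V) (S : Finset V)
    (c₁ c₂ : (G.induce {v : V | v ∉ S}).ConnectedComponent) : Prop :=
  ∃ ψ : G.induce (↑S ∪ suppSet G S c₁) ≃g G.induce (↑S ∪ suppSet G S c₂),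
    (∀ (v : V) (h : v ∈ S),
        ((ψ ⟨v, Or.inl h⟩ : {x : V // x ∈ ↑S ∪ suppSet G S c₂}) : V) = v) ∧
    ∀ (x : {x : V // x ∈ ↑S ∪ suppSet G S c₁}) (i : Fin p),
      (x : V) ∈ C i ↔ ((ψ x : {x : V // x ∈ ↑S ∪ suppSet G S c₂}) : V) ∈ C i

section Aux

variable {V : Type*} [Fintype V] (G : SimpleGraph V) (S : Finset V)

/-- The number of vertices of a component of `G - S`. -/
noncomputable def nC (c : (G.induce {v : V | v ∉ S}).ConnectedComponent) : ℕ :=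
  Nat.card c.supp

/-- An enumeration of the vertices of a component of `G - S`. -/
noncomputable def vert (c : (G.induce {v : V | v ∉ S}).ConnectedComponent)
    (i : Fin (nC G S c)) : V :=
  (((Finite.equivFin c.supp).symm i).1 : {v : V | v ∉ S}).1

lemma vert_not_mem (c : (G.induce {v : V | v ∉ S}).ConnectedComponent)
    (i : Fin (nC G S c)) : vert G S c i ∉ S :=
  (((Finite.equivFin c.supp).symm i).1).2

lemma vert_mem_suppSet (c : (G.induce {v : V | v ∉ S}).ConnectedComponent)
    (i : Fin (nC G S c)) : vert G S c i ∈ suppSet G S c :=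
  ⟨((Finite.equivFin c.supp).symm i).1, ((Finite.equivFin c.supp).symm i).2, rfl⟩

lemma vert_inj (c : (G.induce {v : V | v ∉ S}).ConnectedComponent)
    {i j : Fin (nC G S c)} (h : vert G S c i = vert G S c j) : i = j := by
  have h1 : (((Finite.equivFin c.supp).symm i) : _) = ((Finite.equivFin c.supp).symm j : _) :=
    Subtype.ext (Subtype.ext h)
  exact (Finite.equivFin c.supp).symm.injective h1

lemma exists_vert (c : (G.induce {v : V | v ∉ S}).ConnectedComponent)
    {x : V} (hx : x ∈ suppSet G S c) : ∃ i, vert G S c i = x := by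
  obtain ⟨y, hy, rfl⟩ := hx
  refine ⟨Finite.equivFin c.supp ⟨y, hy⟩, ?_⟩
  simp [vert]
  exact congrArg (fun z => z.1.1) ((Finite.equivFin c.supp).symm_apply_apply ⟨y, hy⟩)

lemma mem_dichotomy (c : (G.induce {v : V | v ∉ S}).ConnectedComponent)
    (x : {x : V // x ∈ ↑S ∪ suppSet G S c}) :
    x.1 ∈ S ∨ ∃ i, x.1 = vert G S c i := by
  by_cases hx : x.1 ∈ S
  · exact Or.inl hx
  · rcases x.2 with h | h
    · exact absurd h hx
    · obtain ⟨i, hi⟩ := exists_vert G S c h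
      exact Or.inr ⟨i, hi.symm⟩

open Classical in
/-- The "translation" map between the two induced subgraphs. -/
noncomputable def trFun (c₁ c₂ : (G.induce {v : V | v ∉ S}).ConnectedComponent)
    (hn : nC G S c₁ = nC G S c₂)
    (x : {x : V // x ∈ ↑S ∪ suppSet G S c₁}) : {x : V // x ∈ ↑S ∪ suppSet G S c₂} :=
  if hx : x.1 ∈ S then ⟨x.1, Or.inl hx⟩
  else
    ⟨vert G S c₂ (Fin.cast hn (exists_vert G S c₁ (x.2.resolve_left hx)).choose),
      Or.inr (vert_mem_suppSet _ _ _ _)⟩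

lemma trFun_mem (c₁ c₂ : (G.induce {v : V | v ∉ S}).ConnectedComponent)
    (hn : nC G S c₁ = nC G S c₂) (x : {x : V // x ∈ ↑S ∪ suppSet G S c₁})
    (hx : x.1 ∈ S) : (trFun G S c₁ c₂ hn x).1 = x.1 := by
  simp [trFun, hx]

lemma trFun_vert (c₁ c₂ : (G.induce {v : V | v ∉ S}).ConnectedComponent)
    (hn : nC G S c₁ = nC G S c₂) (x : {x : V // x ∈ ↑S ∪ suppSet G S c₁})
    (i : Fin (nC G S c₁)) (hx : x.1 = vert G S c₁ i) :
    (trFun G S c₁ c₂ hn x).1 = vert G S c₂ (Fin.cast hn i) := by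
  have hxS : ¬ x.1 ∈ S := by rw [hx]; exact vert_not_mem G S c₁ i
  rw [trFun, dif_neg hxS]
  have hch := (exists_vert G S c₁ (x.2.resolve_left hxS)).choose_spec
  have hc : (exists_vert G S c₁ (x.2.resolve_left hxS)).choose = i :=
    vert_inj G S c₁ (by rw [hch, hx])
  show vert G S c₂ _ = vert G S c₂ _
  exact congrArg (fun t => vert G S c₂ (Fin.cast hn t)) hc

lemma trFun_trFun (c₁ c₂ : (G.induce {v : V | v ∉ S}).ConnectedComponent)
    (hn : nC G S c₁ = nC G S c₂) (x : {x : V // x ∈ ↑S ∪ suppSet G S c₁}) :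
    trFun G S c₂ c₁ hn.symm (trFun G S c₁ c₂ hn x) = x := by
  rcases mem_dichotomy G S c₁ x with hx | ⟨i, hi⟩
  · apply Subtype.ext
    rw [trFun_mem G S c₂ c₁ hn.symm _ (by rw [trFun_mem G S c₁ c₂ hn x hx]; exact hx),
      trFun_mem G S c₁ c₂ hn x hx]
  · apply Subtype.ext
    rw [trFun_vert G S c₂ c₁ hn.symm _ (Fin.cast hn i) (trFun_vert G S c₁ c₂ hn x i hi)]
    simpa using hi.symm

variable (k : ℕ)

open Classical in
/-- Pairs `(j : Fin k)` with the vertex it refers to: an element of `S` if `j < S.card`,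
a component vertex if `S.card ≤ j < S.card + nC c`. -/
noncomputable def other (c : (G.induce {v : V | v ∉ S}).ConnectedComponent)
    (j : Fin k) : Option V :=
  if hj : (j : ℕ) < S.card then some ((S.equivFin.symm ⟨j, hj⟩ : S) : V)
  else if hj2 : (j : ℕ) - S.card < nC G S c then some (vert G S c ⟨(j : ℕ) - S.card, hj2⟩)
  else none

open Classical in
/-- Adjacency bits. -/
noncomputable def bitA (c : (G.induce {v : V | v ∉ S}).ConnectedComponent)
    (i j : Fin k) : Bool :=
  if hi : (i : ℕ) < nC G S c then
    match other G S k c j with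
    | some y => decide (G.Adj (vert G S c ⟨i, hi⟩) y)
    | none => false
  else false

open Classical in
/-- Color bits. -/
noncomputable def bitCol {p : ℕ} (C : Fin p → Set V)
    (c : (G.induce {v : V | v ∉ S}).ConnectedComponent)
    (q : Fin p) (i : Fin k) : Bool :=
  if hi : (i : ℕ) < nC G S c then decide (vert G S c ⟨i, hi⟩ ∈ C q) else false

open Classical in
lemma bitA_eq_S (c : (G.induce {v : V | v ∉ S}).ConnectedComponent)
    (i : Fin (nC G S c)) (j : Fin S.card) (hi : (i : ℕ) < k) (hj : (j : ℕ) < k) :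
    bitA G S k c ⟨i, hi⟩ ⟨j, hj⟩
      = decide (G.Adj (vert G S c i) ((S.equivFin.symm j : S) : V)) := by
  rw [bitA, dif_pos (show ((⟨(i : ℕ), hi⟩ : Fin k) : ℕ) < nC G S c from i.2)]
  rw [other, dif_pos (show ((⟨(j : ℕ), hj⟩ : Fin k) : ℕ) < S.card from j.2)]

open Classical in
lemma bitA_eq_comp (c : (G.induce {v : V | v ∉ S}).ConnectedComponent)
    (i i2 : Fin (nC G S c)) (hi : (i : ℕ) < k) (hj : S.card + (i2 : ℕ) < k) :
    bitA G S k c ⟨i, hi⟩ ⟨S.card + (i2 : ℕ), hj⟩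
      = decide (G.Adj (vert G S c i) (vert G S c i2)) := by
  rw [bitA, dif_pos (show ((⟨(i : ℕ), hi⟩ : Fin k) : ℕ) < nC G S c from i.2)]
  have h1 : ¬ ((⟨S.card + (i2 : ℕ), hj⟩ : Fin k) : ℕ) < S.card := by simp
  have h2 : ((⟨S.card + (i2 : ℕ), hj⟩ : Fin k) : ℕ) - S.card < nC G S c := by
    simp [i2.2]
  rw [other, dif_neg h1, dif_pos h2]
  apply decide_eq_decide.mpr
  have hii : (⟨((⟨S.card + (i2 : ℕ), hj⟩ : Fin k) : ℕ) - S.card, h2⟩ : Fin (nC G S c)) = i2 :=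
    Fin.ext (by simp)
  rw [hii]

open Classical in
lemma bitCol_eq {p : ℕ} (C : Fin p → Set V)
    (c : (G.induce {v : V | v ∉ S}).ConnectedComponent)
    (q : Fin p) (i : Fin (nC G S c)) (hi : (i : ℕ) < k) :
    bitCol G S k C c q ⟨i, hi⟩ = decide (vert G S c i ∈ C q) := by
  rw [bitCol, dif_pos (show ((⟨(i : ℕ), hi⟩ : Fin k) : ℕ) < nC G S c from i.2)]

/-- Main decoding lemma: equal codes imply same type. -/
lemma sameType_of_code_eq {p : ℕ} (C : Fin p → Set V)
    (hsk : S.card ≤ k)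
    (c₁ c₂ : (G.induce {v : V | v ∉ S}).ConnectedComponent)
    (hb₁ : nC G S c₁ ≤ k - S.card) (hb₂ : nC G S c₂ ≤ k - S.card)
    (hn : nC G S c₁ = nC G S c₂)
    (h2 : ∀ i j : Fin k, bitA G S k c₁ i j = bitA G S k c₂ i j)
    (h3 : ∀ (q : Fin p) (i : Fin k), bitCol G S k C c₁ q i = bitCol G S k C c₂ q i) :
    SameType G C S c₁ c₂ := by
  have hiK : ∀ i : Fin (nC G S c₁), (i : ℕ) < k := fun i => by
    have := i.2; omega
  have hiK2 : ∀ i : Fin (nC G S c₂), (i : ℕ) < k := fun i => by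
    have := i.2; omega
  have hsiK : ∀ i : Fin (nC G S c₁), S.card + (i : ℕ) < k := fun i => by
    have := i.2; omega
  -- adjacency to S vertices
  have adjS : ∀ (i : Fin (nC G S c₁)) (v : V) (hv : v ∈ S),
      G.Adj (vert G S c₁ i) v ↔ G.Adj (vert G S c₂ (Fin.cast hn i)) v := by
    intro i v hv
    set j : Fin S.card := S.equivFin ⟨v, hv⟩ with hjdef
    have hjk : (j : ℕ) < k := lt_of_lt_of_le j.2 hsk
    have key := h2 ⟨i, hiK i⟩ ⟨j, hjk⟩
    rw [bitA_eq_S G S k c₁ i j (hiK i) hjk] at key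
    rw [show (⟨(i : ℕ), hiK i⟩ : Fin k) = ⟨((Fin.cast hn i : Fin (nC G S c₂)) : ℕ),
        hiK2 (Fin.cast hn i)⟩ from rfl] at key
    rw [bitA_eq_S G S k c₂ (Fin.cast hn i) j (hiK2 _) hjk] at key
    have hev : ((S.equivFin.symm j : S) : V) = v := by rw [hjdef]; simp
    rw [hev] at key
    exact decide_eq_decide.mp key
  -- adjacency among component vertices
  have adjC : ∀ (i i2 : Fin (nC G S c₁)),
      G.Adj (vert G S c₁ i) (vert G S c₁ i2) ↔
        G.Adj (vert G S c₂ (Fin.cast hn i)) (vert G S c₂ (Fin.cast hn i2)) := by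
    intro i i2
    have key := h2 ⟨i, hiK i⟩ ⟨S.card + (i2 : ℕ), hsiK i2⟩
    rw [bitA_eq_comp G S k c₁ i i2 (hiK i) (hsiK i2)] at key
    rw [show (⟨(i : ℕ), hiK i⟩ : Fin k) = ⟨((Fin.cast hn i : Fin (nC G S c₂)) : ℕ),
        hiK2 (Fin.cast hn i)⟩ from rfl] at key
    rw [show (⟨S.card + (i2 : ℕ), hsiK i2⟩ : Fin k)
        = ⟨S.card + ((Fin.cast hn i2 : Fin (nC G S c₂)) : ℕ),
          by simpa using hsiK i2⟩ from rfl] at key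
    rw [bitA_eq_comp G S k c₂ (Fin.cast hn i) (Fin.cast hn i2) (hiK2 _) (by simpa using hsiK i2)]
      at key
    exact decide_eq_decide.mp key
  -- colors
  have colC : ∀ (i : Fin (nC G S c₁)) (q : Fin p),
      vert G S c₁ i ∈ C q ↔ vert G S c₂ (Fin.cast hn i) ∈ C q := by
    intro i q
    have key := h3 q ⟨i, hiK i⟩
    rw [bitCol_eq G S k C c₁ q i (hiK i)] at key
    rw [show (⟨(i : ℕ), hiK i⟩ : Fin k) = ⟨((Fin.cast hn i : Fin (nC G S c₂)) : ℕ),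
        hiK2 (Fin.cast hn i)⟩ from rfl] at key
    rw [bitCol_eq G S k C c₂ q (Fin.cast hn i) (hiK2 _)] at key
    exact decide_eq_decide.mp key
  -- the equivalence
  let e : {x : V // x ∈ ↑S ∪ suppSet G S c₁} ≃ {x : V // x ∈ ↑S ∪ suppSet G S c₂} :=
    ⟨trFun G S c₁ c₂ hn, trFun G S c₂ c₁ hn.symm,
      trFun_trFun G S c₁ c₂ hn, trFun_trFun G S c₂ c₁ hn.symm⟩
  have adj_iff : ∀ x y : {x : V // x ∈ ↑S ∪ suppSet G S c₁},
      G.Adj (trFun G S c₁ c₂ hn x).1 (trFun G S c₁ c₂ hn y).1 ↔ G.Adj x.1 y.1 := by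
    intro x y
    rcases mem_dichotomy G S c₁ x with hx | ⟨i, hi⟩ <;>
      rcases mem_dichotomy G S c₁ y with hy | ⟨i2, hi2⟩
    · rw [trFun_mem G S c₁ c₂ hn x hx, trFun_mem G S c₁ c₂ hn y hy]
    · rw [trFun_mem G S c₁ c₂ hn x hx, trFun_vert G S c₁ c₂ hn y i2 hi2, hi2,
        G.adj_comm x.1, G.adj_comm x.1]
      exact (adjS i2 x.1 hx).symm
    · rw [trFun_mem G S c₁ c₂ hn y hy, trFun_vert G S c₁ c₂ hn x i hi, hi]
      exact (adjS i y.1 hy).symm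
    · rw [trFun_vert G S c₁ c₂ hn x i hi, trFun_vert G S c₁ c₂ hn y i2 hi2, hi, hi2]
      exact (adjC i i2).symm
  refine ⟨⟨e, ?_⟩, ?_, ?_⟩
  · intro x y
    exact adj_iff x y
  · intro v h
    exact trFun_mem G S c₁ c₂ hn ⟨v, Or.inl h⟩ h
  · intro x q
    rcases mem_dichotomy G S c₁ x with hx | ⟨i, hi⟩
    · show x.1 ∈ C q ↔ (trFun G S c₁ c₂ hn x).1 ∈ C q
      rw [trFun_mem G S c₁ c₂ hn x hx]
    · show x.1 ∈ C q ↔ (trFun G S c₁ c₂ hn x).1 ∈ C q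
      rw [trFun_vert G S c₁ c₂ hn x i hi, hi]
      exact colC i q

end Aux

/-- For a `p`-colored graph `(G, C)` and a vi(k)-set `S`, the number of equivalence
classes of connected components of `G − S` under the same-`(G,S)`-type relation is at
most `(k+1) · 2^(k² + pk)`. -/
theorem stmt_6 {V : Type*} [Fintype V] (G : SimpleGraph V) {p : ℕ} (C : Fin p → Set V)
    (k : ℕ) (S : Finset V) (hS : IsVISet G k S) :
    Nat.card (Quot (SameType G C S)) ≤ (k + 1) * 2 ^ (k ^ 2 + p * k) := by
  obtain ⟨hsk, hb⟩ := hS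
  rcases Nat.eq_zero_or_pos k with rfl | hk
  · -- k = 0 : there are no components at all
    have hempty : IsEmpty ((G.induce {v : V | v ∉ S}).ConnectedComponent) := by
      constructor
      intro c
      obtain ⟨v, hv⟩ := c.exists_rep
      have h1 : 0 < Nat.card c.supp := by
        have : v ∈ c.supp := hv
        exact Nat.card_pos_iff.mpr ⟨⟨v, this⟩, Set.toFinite _⟩
      have h2 := hb c
      omega
    have : IsEmpty (Quot (SameType G C S)) := by
      constructor
      intro q
      exact hempty.elim q.out
    simp [Nat.card_of_isEmpty]
  · -- k > 0 : encode via codes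
    set Code := Fin (k + 1) × (Fin (k ^ 2) → Bool) × (Fin (p * k) → Bool) with hCode
    have hdivA : ∀ m : Fin (k ^ 2), (m : ℕ) / k < k := by
      intro m
      rw [Nat.div_lt_iff_lt_mul hk]
      exact lt_of_lt_of_eq m.2 (pow_two k)
    have hdivC : ∀ m : Fin (p * k), (m : ℕ) / k < p := by
      intro m
      rw [Nat.div_lt_iff_lt_mul hk]
      have := m.2
      omega
    let code : Quot (SameType G C S) → Code := fun q =>
      (⟨nC G S q.out, by have := hb q.out; simp only [nC]; omega⟩,
        fun m => bitA G S k q.out ⟨(m : ℕ) / k, hdivA m⟩ ⟨(m : ℕ) % k, Nat.mod_lt _ hk⟩,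
        fun m => bitCol G S k C q.out ⟨(m : ℕ) / k, hdivC m⟩ ⟨(m : ℕ) % k, Nat.mod_lt _ hk⟩)
    have hinj : Function.Injective code := by
      intro q₁ q₂ h
      have hfst := congrArg Prod.fst h
      have hsnd := congrArg (fun z : Code => z.2.1) h
      have hthd := congrArg (fun z : Code => z.2.2) h
      simp only [code] at hfst hsnd hthd
      have h1 : nC G S q₁.out = nC G S q₂.out := by
        have := congrArg Fin.val hfst
        simpa using this
      have h2 : ∀ i j : Fin k, bitA G S k q₁.out i j = bitA G S k q₂.out i j := by
        intro i j
        have hm : (j : ℕ) + k * (i : ℕ) < k ^ 2 := by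
          calc (j : ℕ) + k * (i : ℕ) < k + k * (i : ℕ) := by have := j.2; omega
            _ = k * ((i : ℕ) + 1) := by ring
            _ ≤ k * k := Nat.mul_le_mul_left _ i.2
            _ = k ^ 2 := (pow_two k).symm
        have key := congrFun hsnd ⟨(j : ℕ) + k * (i : ℕ), hm⟩
        have hdiv : ((j : ℕ) + k * (i : ℕ)) / k = (i : ℕ) := by
          rw [Nat.add_mul_div_left _ _ hk, Nat.div_eq_of_lt j.2, Nat.zero_add]
        have hmod : ((j : ℕ) + k * (i : ℕ)) % k = (j : ℕ) := by
          rw [Nat.add_mul_mod_self_left, Nat.mod_eq_of_lt j.2]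
        simp only at key
        have e1 : (⟨((j : ℕ) + k * (i : ℕ)) / k, hdivA ⟨(j : ℕ) + k * (i : ℕ), hm⟩⟩ : Fin k) = i :=
          Fin.ext hdiv
        have e2 : (⟨((j : ℕ) + k * (i : ℕ)) % k, Nat.mod_lt _ hk⟩ : Fin k) = j := Fin.ext hmod
        rwa [e1, e2] at key
      have h3 : ∀ (q : Fin p) (i : Fin k),
          bitCol G S k C q₁.out q i = bitCol G S k C q₂.out q i := by
        intro q i
        have hm : (i : ℕ) + k * (q : ℕ) < p * k := by
          calc (i : ℕ) + k * (q : ℕ) < k + k * (q : ℕ) := by have := i.2; omega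
            _ = k * ((q : ℕ) + 1) := by ring
            _ ≤ k * p := Nat.mul_le_mul_left _ q.2
            _ = p * k := Nat.mul_comm _ _
        have key := congrFun hthd ⟨(i : ℕ) + k * (q : ℕ), hm⟩
        have hdiv : ((i : ℕ) + k * (q : ℕ)) / k = (q : ℕ) := by
          rw [Nat.add_mul_div_left _ _ hk, Nat.div_eq_of_lt i.2, Nat.zero_add]
        have hmod : ((i : ℕ) + k * (q : ℕ)) % k = (i : ℕ) := by
          rw [Nat.add_mul_mod_self_left, Nat.mod_eq_of_lt i.2]
        simp only at key
        have e1 : (⟨((i : ℕ) + k * (q : ℕ)) / k, hdivC ⟨(i : ℕ) + k * (q : ℕ), hm⟩⟩ : Fin p) = q :=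
          Fin.ext hdiv
        have e2 : (⟨((i : ℕ) + k * (q : ℕ)) % k, Nat.mod_lt _ hk⟩ : Fin k) = i := Fin.ext hmod
        rwa [e1, e2] at key
      have hst : SameType G C S q₁.out q₂.out :=
        sameType_of_code_eq G S k C hsk q₁.out q₂.out (hb _) (hb _) h1 h2 h3
      rw [← Quot.out_eq q₁, ← Quot.out_eq q₂]
      exact Quot.sound hst
    have hcard : Nat.card Code = (k + 1) * 2 ^ (k ^ 2 + p * k) := by
      simp [hCode, Nat.card_eq_fintype_card, pow_add]
    calc Nat.card (Quot (SameType G C S)) ≤ Nat.card Code :=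
          Nat.card_le_card_of_injective code hinj
      _ = (k + 1) * 2 ^ (k ^ 2 + p * k) := hcard
end

section
/- Fix positive integers t, n, B and positive integers a_1, …, a_n with Σ_{i∈[n]} a_i = tB, and let G be the bin-packing reduction graph for these data. If there is a partition S_1, …, S_t of [n] such that Σ_{i∈S_j} a_i = B for every j ∈ [t], then there is a partition V_1, …, V_t of V(G) such that for every j ∈ [t] the induced subgraph G[V_j] is connected and |V_j| = 3B. -/
/-- Vertex type of the bin-packing reduction graph: the vertices `u i`, the vertices
`w j`, the `a i - 1` pendant vertices attached to `u i`, and the `2B - 1` pendant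
vertices attached to `w j`. -/
inductive BPV (t n B : ℕ) (a : Fin n → ℕ) : Type where
  | u (i : Fin n)
  | w (j : Fin t)
  | p (i : Fin n) (x : Fin (a i - 1))
  | q (j : Fin t) (y : Fin (2 * B - 1))
  deriving DecidableEq, Fintype

/-- Base relation defining the edges of the bin-packing reduction graph:
every `u i` is adjacent to every `w j`, each pendant `p i x` is adjacent only to
`u i`, and each pendant `q j y` is adjacent only to `w j`. -/
def bpRel (t n B : ℕ) (a : Fin n → ℕ) : BPV t n B a → BPV t n B a → Prop
  | .u _, .w _ => True
  | .p i _, .u i' => i = i'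
  | .q j _, .w j' => j = j'
  | _, _ => False

/-- The bin-packing reduction graph. -/
def bpGraph (t n B : ℕ) (a : Fin n → ℕ) : SimpleGraph (BPV t n B a) :=
  SimpleGraph.fromRel (bpRel t n B a)

/-!
Put item `i` into the bin `j` with `i ∈ S_j`, and let `V_j` consist of `w_j` with its pendants
and of the stars `{u_i} ∪ P_i` of the items in bin `j`. Every vertex of `V_j` is within
distance two of `w_j` inside `V_j`, and `|V_j| = 2B + ∑_{i ∈ S_j} a_i = 3B`.
-/

open Finset

theorem SimpleGraph.induce_connected_of_forall_adj_or_adj_adj {V : Type*} {G : SimpleGraph V}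
    {s : Set V} {c : V} (hc : c ∈ s)
    (h : ∀ v ∈ s, v = c ∨ G.Adj v c ∨ ∃ m ∈ s, G.Adj v m ∧ G.Adj m c) :
    (G.induce s).Connected := by
  refine (connected_iff_exists_forall_reachable _).2 ⟨⟨c, hc⟩, fun ⟨v, hv⟩ => ?_⟩
  rcases h v hv with rfl | hvc | ⟨m, hm, hvm, hmc⟩
  · rfl
  · exact (show (G.induce s).Adj ⟨v, hv⟩ ⟨c, hc⟩ from hvc).reachable.symm
  · exact ((show (G.induce s).Adj ⟨v, hv⟩ ⟨m, hm⟩ from hvm).reachable.trans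
      (show (G.induce s).Adj ⟨m, hm⟩ ⟨c, hc⟩ from hmc).reachable).symm

namespace BPV

variable {t n B : ℕ} {a : Fin n → ℕ}

lemma adj_u_w (i : Fin n) (j : Fin t) : (bpGraph t n B a).Adj (u i) (w j) := by
  simp [bpGraph, bpRel]

lemma adj_p_u (i : Fin n) (x : Fin (a i - 1)) : (bpGraph t n B a).Adj (p i x) (u i) := by
  simp [bpGraph, bpRel]

lemma adj_q_w (j : Fin t) (y : Fin (2 * B - 1)) : (bpGraph t n B a).Adj (q j y) (w j) := by
  simp [bpGraph, bpRel]

/-- The graph consists of stars centred at the `u i` and the `w j`, plus all edges between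
centres; this is the centre of the star a vertex lies in. -/
def center : BPV t n B a → Fin n ⊕ Fin t
  | u i | p i _ => .inl i
  | w j | q j _ => .inr j

lemma card_filter_center_inl {i : Fin n} (hi : 0 < a i) :
    #{x : BPV t n B a | x.center = .inl i} = a i := by
  have : ({x : BPV t n B a | x.center = .inl i} : Finset _) =
      cons (u i) (univ.map ⟨p i, fun _ _ h => by cases h; rfl⟩) (by simp) := by
    ext x
    simp only [mem_filter, mem_univ, true_and, mem_cons, mem_map]
    cases x with
    | p i' y =>
      refine ⟨fun h => by cases h; exact .inr ⟨y, rfl⟩, ?_⟩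
      rintro (h | ⟨z, h⟩) <;> cases h
      rfl
    | _ => simp [center]
  rw [this, card_cons, card_map, card_univ, Fintype.card_fin]
  omega

lemma card_filter_center_inr (hB : 0 < B) (j : Fin t) :
    #{x : BPV t n B a | x.center = .inr j} = 2 * B := by
  have : ({x : BPV t n B a | x.center = .inr j} : Finset _) =
      cons (w j) (univ.map ⟨q j, fun _ _ h => by cases h; rfl⟩) (by simp) := by
    ext x
    simp only [mem_filter, mem_univ, true_and, mem_cons, mem_map]
    cases x with
    | q j' y =>
      refine ⟨fun h => by cases h; exact .inr ⟨y, rfl⟩, ?_⟩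
      rintro (h | ⟨z, h⟩) <;> cases h
      rfl
    | _ => simp [center]
  rw [this, card_cons, card_map, card_univ, Fintype.card_fin]
  omega

def bin (f : Fin n → Fin t) (x : BPV t n B a) : Fin t :=
  Sum.elim f id x.center

lemma card_filter_bin (hB : 0 < B) (ha : ∀ i, 0 < a i) (f : Fin n → Fin t) (j : Fin t) :
    #{x : BPV t n B a | x.bin f = j} = 2 * B + ∑ i with f i = j, a i := by
  rw [card_eq_sum_card_fiberwise (f := center) (t := {o | Sum.elim f id o = j})
    (fun _ hx => by simpa [bin] using (mem_filter.1 hx).2)]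
  rw [sum_congr rfl (g := fun o => #{x : BPV t n B a | x.center = o}) fun o ho => ?_]
  · rw [sum_filter, Fintype.sum_sum_type]
    simp [card_filter_center_inl (ha _), card_filter_center_inr hB, sum_filter, add_comm]
  · rw [filter_filter]
    refine congrArg card (filter_congr fun x _ => ?_)
    simp only [bin, and_iff_right_iff_imp]
    rintro rfl
    simpa using ho

lemma induce_bin_connected (f : Fin n → Fin t) (j : Fin t) :
    ((bpGraph t n B a).induce {x | x.bin f = j}).Connected := by
  refine SimpleGraph.induce_connected_of_forall_adj_or_adj_adj (c := w j) rfl ?_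
  rintro (i | j' | i | j') hx <;> simp only [Set.mem_ofPred_eq, bin, center, Sum.elim_inl,
    Sum.elim_inr, id] at hx <;> subst hx
  · exact .inr (.inl (adj_u_w _ _))
  · exact .inl rfl
  · exact .inr (.inr ⟨u i, rfl, adj_p_u _ _, adj_u_w _ _⟩)
  · exact .inr (.inl (adj_q_w _ _))

end BPV

theorem stmt_8_general (t n B : ℕ) (hB : 0 < B)
    (a : Fin n → ℕ) (ha : ∀ i, 0 < a i)
    (Spart : Fin t → Finset (Fin n))
    (hpart : ∀ i : Fin n, ∃! j : Fin t, i ∈ Spart j)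
    (hbal : ∀ j : Fin t, ∑ i ∈ Spart j, a i = B) :
    ∃ Vpart : Fin t → Finset (BPV t n B a),
      (∀ x : BPV t n B a, ∃! j : Fin t, x ∈ Vpart j) ∧
      ∀ j : Fin t,
        ((bpGraph t n B a).induce (Vpart j : Set (BPV t n B a))).Connected ∧
        (Vpart j).card = 3 * B := by
  choose f hf hf_unique using hpart
  have hSpart : ∀ j, ({i | f i = j} : Finset _) = Spart j := fun j => by
    ext i; simpa using ⟨fun h => h ▸ hf i, fun h => (hf_unique i j h).symm⟩
  refine ⟨fun j => {x | x.bin f = j}, fun x => ⟨x.bin f, by simp, fun j hj => by simp_all⟩,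
    fun j => ⟨by rw [coe_filter_univ]; exact BPV.induce_bin_connected f j, ?_⟩⟩
  rw [BPV.card_filter_bin hB ha, hSpart, hbal]
  ring

/-- If `[n]` can be partitioned into `t` sets each of `a`-weight `B`, then the
vertices of the bin-packing reduction graph can be partitioned into `t` parts, each
inducing a connected subgraph of exactly `3B` vertices. -/
theorem stmt_8 (t n B : ℕ) (ht : 0 < t) (hn : 0 < n) (hB : 0 < B)
    (a : Fin n → ℕ) (ha : ∀ i, 0 < a i) (hsum : ∑ i, a i = t * B)
    (Spart : Fin t → Finset (Fin n))
    (hpart : ∀ i : Fin n, ∃! j : Fin t, i ∈ Spart j)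
    (hbal : ∀ j : Fin t, ∑ i ∈ Spart j, a i = B) :
    ∃ Vpart : Fin t → Finset (BPV t n B a),
      (∀ x : BPV t n B a, ∃! j : Fin t, x ∈ Vpart j) ∧
      ∀ j : Fin t,
        ((bpGraph t n B a).induce (Vpart j : Set (BPV t n B a))).Connected ∧
        (Vpart j).card = 3 * B :=
  stmt_8_general t n B hB a ha Spart hpart hbal
end

section
/- Fix positive integers t, n, B and positive integers a_1, …, a_n with Σ_{i∈[n]} a_i = tB, and let G be the bin-packing reduction graph for these data. If there is a partition V_1, …, V_t of V(G) such that for every j ∈ [t] the induced subgraph G[V_j] is connected and |V_j| = 3B, then there is a partition S_1, …, S_t of [n] such that Σ_{i∈S_j} a_i = B for every j ∈ [t]. -/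
/-- In a connected induced subgraph on at least two vertices, every vertex has a
neighbor inside the vertex set. -/
lemma exists_adj_of_mem {V : Type*} [DecidableEq V] {G : SimpleGraph V} {s : Finset V}
    (hconn : (G.induce (s : Set V)).Connected) (hcard : 2 ≤ s.card) {x : V} (hx : x ∈ s) :
    ∃ z ∈ s, G.Adj x z := by
  obtain ⟨y, hy, hne⟩ := Finset.exists_mem_ne hcard x
  have hne' : (⟨x, hx⟩ : (s : Set V)) ≠ ⟨y, hy⟩ := by simp [Subtype.ext_iff, hne.symm]
  obtain ⟨w⟩ := hconn.preconnected ⟨x, hx⟩ ⟨y, hy⟩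
  have hadj := SimpleGraph.Walk.adj_snd (p := w) (SimpleGraph.Walk.not_nil_of_ne hne')
  exact ⟨_, (w.getVert 1).2, hadj⟩

/-- The only neighbor of a pendant `q j y` is `w j`. -/
lemma adj_q {t n B : ℕ} {a : Fin n → ℕ} {j : Fin t} {y : Fin (2*B-1)} {z : BPV t n B a}
    (h : (bpGraph t n B a).Adj (.q j y) z) : z = .w j := by
  rw [bpGraph, SimpleGraph.fromRel_adj] at h
  obtain ⟨-, h | h⟩ := h <;> cases z <;> simp_all [bpRel]

/-- The only neighbor of a pendant `p i x` is `u i`. -/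
lemma adj_p {t n B : ℕ} {a : Fin n → ℕ} {i : Fin n} {x : Fin (a i - 1)} {z : BPV t n B a}
    (h : (bpGraph t n B a).Adj (.p i x) z) : z = .u i := by
  rw [bpGraph, SimpleGraph.fromRel_adj] at h
  obtain ⟨-, h | h⟩ := h <;> cases z <;> simp_all [bpRel]

/-- Explicit equivalence of the vertex type with a sum type, used for counting. -/
def bpEquiv (t n B : ℕ) (a : Fin n → ℕ) :
    BPV t n B a ≃ (Fin n ⊕ Fin t ⊕ (Σ i : Fin n, Fin (a i - 1)) ⊕ (Fin t × Fin (2*B-1))) where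
  toFun x := match x with
    | .u i => .inl i
    | .w j => .inr (.inl j)
    | .p i x => .inr (.inr (.inl ⟨i, x⟩))
    | .q j y => .inr (.inr (.inr (j, y)))
  invFun x := match x with
    | .inl i => .u i
    | .inr (.inl j) => .w j
    | .inr (.inr (.inl ⟨i, x⟩)) => .p i x
    | .inr (.inr (.inr (j, y))) => .q j y
  left_inv x := by cases x <;> rfl
  right_inv x := by rcases x with i | j | ⟨i, x⟩ | ⟨j, y⟩ <;> rfl

/-- Decomposition of a sum over all vertices according to the four kinds of vertices. -/
lemma bp_sum {t n B : ℕ} {a : Fin n → ℕ} (g : BPV t n B a → ℕ) :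
    ∑ x : BPV t n B a, g x =
      (∑ i, g (.u i)) + (∑ j, g (.w j)) + (∑ i, ∑ x : Fin (a i - 1), g (.p i x)) +
        (∑ j, ∑ y : Fin (2*B-1), g (.q j y)) := by
  rw [← Equiv.sum_comp (bpEquiv t n B a).symm g]
  simp only [Fintype.sum_sum_type, Fintype.sum_prod_type, ← Finset.univ_sigma_univ,
    Finset.sum_sigma]
  ring_nf
  rfl

/-- If the vertices of the bin-packing reduction graph can be partitioned into `t`
parts, each inducing a connected subgraph of exactly `3B` vertices, then `[n]` can be
partitioned into `t` sets each of `a`-weight `B`. -/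
theorem stmt_9 (t n B : ℕ) (ht : 0 < t) (hn : 0 < n) (hB : 0 < B)
    (a : Fin n → ℕ) (ha : ∀ i, 0 < a i) (hsum : ∑ i, a i = t * B)
    (Vpart : Fin t → Finset (BPV t n B a))
    (hpart : ∀ x : BPV t n B a, ∃! j : Fin t, x ∈ Vpart j)
    (hconn : ∀ j : Fin t,
      ((bpGraph t n B a).induce (Vpart j : Set (BPV t n B a))).Connected)
    (hcard : ∀ j : Fin t, (Vpart j).card = 3 * B) :
    ∃ Spart : Fin t → Finset (Fin n),
      (∀ i : Fin n, ∃! j : Fin t, i ∈ Spart j) ∧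
      ∀ j : Fin t, ∑ i ∈ Spart j, a i = B := by
  classical
  -- forward directions: a pendant forces its support vertex into the same part
  have hq_fwd : ∀ (k j : Fin t) (y : Fin (2*B-1)),
      BPV.q j y ∈ Vpart k → BPV.w j ∈ Vpart k := by
    intro k j y hq
    obtain ⟨z, hz, hadj⟩ := exists_adj_of_mem (hconn k) (by rw [hcard k]; omega) hq
    rwa [adj_q hadj] at hz
  have hp_fwd : ∀ (k : Fin t) (i : Fin n) (x : Fin (a i - 1)),
      BPV.p i x ∈ Vpart k → BPV.u i ∈ Vpart k := by
    intro k i x hp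
    obtain ⟨z, hz, hadj⟩ := exists_adj_of_mem (hconn k) (by rw [hcard k]; omega) hp
    rwa [adj_p hadj] at hz
  have hq_mem : ∀ (k j : Fin t) (y : Fin (2*B-1)),
      (BPV.q j y ∈ Vpart k ↔ BPV.w j ∈ Vpart k) := by
    intro k j y
    refine ⟨hq_fwd k j y, fun hw => ?_⟩
    obtain ⟨k', hk', _⟩ := hpart (BPV.q j y)
    obtain ⟨k0, hk0, hu0⟩ := hpart (BPV.w j)
    have h1 : k' = k := (hu0 k' (hq_fwd k' j y hk')).trans (hu0 k hw).symm
    rwa [h1] at hk'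
  have hp_mem : ∀ (k : Fin t) (i : Fin n) (x : Fin (a i - 1)),
      (BPV.p i x ∈ Vpart k ↔ BPV.u i ∈ Vpart k) := by
    intro k i x
    refine ⟨hp_fwd k i x, fun hw => ?_⟩
    obtain ⟨k', hk', _⟩ := hpart (BPV.p i x)
    obtain ⟨k0, hk0, hu0⟩ := hpart (BPV.u i)
    have h1 : k' = k := (hu0 k' (hp_fwd k' i x hk')).trans (hu0 k hw).symm
    rwa [h1] at hk'
  -- notation for the two families of index sets
  set S : Fin t → Finset (Fin n) :=
    fun k => Finset.univ.filter (fun i => BPV.u i ∈ Vpart k) with hS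
  set W : Fin t → Finset (Fin t) :=
    fun k => Finset.univ.filter (fun j => BPV.w j ∈ Vpart k) with hW
  -- the counting identity for each part
  have key : ∀ k, (∑ i ∈ S k, a i) + 2 * B * (W k).card = 3 * B := by
    intro k
    have h1 : (Vpart k).card = ∑ x : BPV t n B a, (if x ∈ Vpart k then 1 else 0) := by
      rw [← Finset.card_filter]
      congr 1
      ext x
      simp
    rw [bp_sum (fun x => if x ∈ Vpart k then 1 else 0)] at h1
    have hA : (∑ i, if BPV.u i ∈ Vpart k then 1 else 0) = (S k).card :=
      (Finset.card_filter _ _).symm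
    have hBc : (∑ j, if BPV.w j ∈ Vpart k then 1 else 0) = (W k).card :=
      (Finset.card_filter _ _).symm
    have hC : (∑ i, ∑ x : Fin (a i - 1), if BPV.p i x ∈ Vpart k then 1 else 0)
        = ∑ i ∈ S k, (a i - 1) := by
      rw [Finset.sum_filter]
      refine Finset.sum_congr rfl fun i _ => ?_
      by_cases h : BPV.u i ∈ Vpart k <;> simp [hp_mem k i, h]
    have hD : (∑ j, ∑ y : Fin (2*B-1), if BPV.q j y ∈ Vpart k then 1 else 0)
        = (W k).card * (2*B - 1) := by
      calc (∑ j, ∑ y : Fin (2*B-1), if BPV.q j y ∈ Vpart k then 1 else 0)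
          = ∑ j ∈ W k, (2*B - 1) := by
            rw [Finset.sum_filter]
            refine Finset.sum_congr rfl fun j _ => ?_
            by_cases h : BPV.w j ∈ Vpart k <;> simp [hq_mem k j, h]
        _ = (W k).card * (2*B - 1) := by rw [Finset.sum_const, smul_eq_mul]
    rw [hA, hBc, hC, hD, hcard k] at h1
    have hSsum : (S k).card + (∑ i ∈ S k, (a i - 1)) = ∑ i ∈ S k, a i := by
      have h3 : ∑ i ∈ S k, a i = ∑ i ∈ S k, ((a i - 1) + 1) :=
        Finset.sum_congr rfl fun i _ => by have := ha i; omega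
      rw [h3, Finset.sum_add_distrib, Finset.sum_const, smul_eq_mul, mul_one]
      omega
    have hWsum : (W k).card + (W k).card * (2*B - 1) = 2 * B * (W k).card := by
      have h2B : 2*B - 1 + 1 = 2*B := by omega
      calc (W k).card + (W k).card * (2*B - 1) = (W k).card * (2*B - 1 + 1) := by ring
        _ = 2 * B * (W k).card := by rw [h2B]; ring
    omega
  -- each part contains at most one w-vertex
  have hWle : ∀ k, (W k).card ≤ 1 := by
    intro k
    by_contra h
    push_neg at h
    have h2 : 2 * B * 2 ≤ 2 * B * (W k).card := Nat.mul_le_mul_left _ h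
    have := key k
    omega
  -- the total number of w-vertices over all parts is t
  have hWtot : ∑ k, (W k).card = t := by
    have : ∀ k, (W k).card = ∑ j, (if BPV.w j ∈ Vpart k then 1 else 0) :=
      fun k => Finset.card_filter _ _
    simp only [this]
    rw [Finset.sum_comm]
    have hinner : ∀ j : Fin t, (∑ k, if BPV.w j ∈ Vpart k then 1 else 0) = 1 := by
      intro j
      obtain ⟨k0, hk0, hu0⟩ := hpart (BPV.w j)
      rw [← Finset.card_filter]
      rw [show Finset.univ.filter (fun k => BPV.w j ∈ Vpart k) = {k0} by
        ext k
        simp only [Finset.mem_filter, Finset.mem_univ, true_and, Finset.mem_singleton]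
        exact ⟨fun h => hu0 k h, fun h => h ▸ hk0⟩]
      simp
    simp [hinner]
  -- hence each part contains exactly one w-vertex
  have hWone : ∀ k, (W k).card = 1 := by
    intro k
    by_contra h
    have hk0 : (W k).card = 0 := by have := hWle k; omega
    have hlt : ∑ k', (W k').card < ∑ _k' : Fin t, 1 := by
      refine Finset.sum_lt_sum (fun i _ => hWle i) ⟨k, Finset.mem_univ k, by omega⟩
    simp only [Finset.sum_const, Finset.card_univ, Fintype.card_fin, smul_eq_mul, mul_one] at hlt
    omega
  refine ⟨S, ?_, ?_⟩
  · intro i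
    obtain ⟨k, hk, hu⟩ := hpart (BPV.u i)
    refine ⟨k, by simp [hS, hk], fun k' hk' => hu k' ?_⟩
    simpa [hS] using hk'
  · intro k
    have := key k
    rw [hWone k] at this
    omega
end

section
/- Fix positive integers t, n, B and positive integers a_1, …, a_n with Σ_{i∈[n]} a_i = tB, and let G be the bin-packing reduction graph for these data. Then the treedepth of G is at most t + 2. -/
open SimpleGraph

section Ranking

variable {V : Type*} [Fintype V] [DecidableEq V] (G : SimpleGraph V)

def inducedHom (A : Set V) : G.induce A →g G :=
  ⟨Subtype.val, fun {_ _} h => h⟩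

lemma treedepthOn_empty : treedepthOn G (∅ : Finset V) = 0 := by
  rw [treedepthOn]; simp

lemma mem_compIn_iff (A : Finset V) (w x : V) :
    x ∈ compIn G A w ↔ x ∈ A ∧ ∃ (hw : w ∈ (A : Set V)) (hx : x ∈ (A : Set V)),
      (G.induce (A : Set V)).Reachable ⟨w, hw⟩ ⟨x, hx⟩ := by
  classical
  simp only [compIn, Finset.mem_filter]

lemma td_ranking (f : V → ℕ) :
    ∀ (k : ℕ) (A : Finset V), (∀ v ∈ A, f v < k) →
      (∀ x y : V, x ∈ A → y ∈ A → x ≠ y → f x = f y →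
        ∀ p : G.Walk x y, (∀ z ∈ p.support, z ∈ A) → ∃ z ∈ p.support, f x < f z) →
      treedepthOn G A ≤ k := by
  intro k
  induction k with
  | zero =>
    intro A hb _
    have : A = ∅ := Finset.eq_empty_of_forall_notMem fun v hv =>
      Nat.not_lt_zero _ (hb v hv)
    rw [this, treedepthOn_empty]
  | succ K ih =>
    intro A hb hP
    rw [treedepthOn]
    apply Finset.sup_le
    rintro ⟨w, hw⟩ -
    have hCne : (compIn G A w).Nonempty := ⟨w, mem_compIn_self G A w hw⟩
    obtain ⟨v, hvC, hvmax⟩ := (compIn G A w).exists_max_image f hCne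
    have hvA : v ∈ A := compIn_subset G A w hvC
    -- strict maximality
    have hstrict : ∀ x ∈ compIn G A w, x ≠ v → f x < f v := by
      intro x hxC hxv
      rcases lt_or_eq_of_le (hvmax x hxC) with h | h
      · exact h
      · exfalso
        rw [mem_compIn_iff] at hxC hvC
        obtain ⟨hxA, hwA, hxA', hrx⟩ := hxC
        obtain ⟨hvA', hwA2, hvA'', hrv⟩ := hvC
        obtain ⟨pwx⟩ := hrx
        obtain ⟨pwv⟩ := hrv
        have hsupp : ∀ z ∈ ((pwx.reverse.append pwv).map
            (inducedHom G (A : Set V))).support, z ∈ A := by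
          intro z hz
          rw [SimpleGraph.Walk.support_map] at hz
          obtain ⟨z', _, rfl⟩ := List.mem_map.mp hz
          exact z'.2
        obtain ⟨z, hzsupp, hzgt⟩ := hP x v hxA hvA' hxv h
          ((pwx.reverse.append pwv).map (inducedHom G (A : Set V))) hsupp
        replace hzsupp : z ∈ ((pwx.reverse.append pwv).map
            (inducedHom G (A : Set V))).support := hzsupp
        rw [SimpleGraph.Walk.support_map] at hzsupp
        obtain ⟨z', hz', hz'val⟩ := List.mem_map.mp hzsupp
        have hz'reach : (G.induce (A : Set V)).Reachable ⟨w, hwA⟩ z' := by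
          rcases (SimpleGraph.Walk.mem_support_append_iff _ _).mp hz' with h' | h'
          · rw [SimpleGraph.Walk.support_reverse, List.mem_reverse] at h'
            exact ⟨pwx.takeUntil z' h'⟩
          · exact ⟨pwv.takeUntil z' h'⟩
        have hzC : z ∈ compIn G A w := by
          rw [mem_compIn_iff]
          refine ⟨hz'val ▸ z'.2, hwA, hz'val ▸ z'.2, ?_⟩
          have : (⟨z, hz'val ▸ z'.2⟩ : (A : Set V)) = z' := Subtype.ext hz'val.symm
          rw [this]
          exact hz'reach
        have := hvmax z hzC
        omega
    have h2 : treedepthOn G ((compIn G A w).erase v) ≤ K := by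
      apply ih
      · intro x hx
        rw [Finset.mem_erase] at hx
        have h1 := hstrict x hx.2 hx.1
        have h2 := hb v hvA
        omega
      · intro x y hx hy hxy hf p hsupp
        exact hP x y (compIn_subset G A w (Finset.mem_of_mem_erase hx))
          (compIn_subset G A w (Finset.mem_of_mem_erase hy)) hxy hf p
          (fun z hz => compIn_subset G A w (Finset.mem_of_mem_erase (hsupp z hz)))
    have h1 : ((compIn G A w).attach.inf'
        (Finset.attach_nonempty_iff.mpr ⟨w, mem_compIn_self G A w hw⟩)
        (fun v => treedepthOn G ((compIn G A w).erase v.1)))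
        ≤ treedepthOn G ((compIn G A w).erase v) :=
      Finset.inf'_le _ (Finset.mem_attach _ ⟨v, hvC⟩)
    exact le_trans (Nat.add_le_add_left (h1.trans h2) 1) (le_of_eq (Nat.add_comm 1 K))

end Ranking

section BP

variable {t n B : ℕ} {a : Fin n → ℕ}

def fBP : BPV t n B a → ℕ
  | .w j => (j : ℕ) + 2
  | .u _ => 1
  | .p _ _ => 0
  | .q _ _ => 0

def isWv : BPV t n B a → Prop
  | .w _ => True
  | _ => False

def cOf : BPV t n B a → Option (Fin n)
  | .u i => some i
  | .p i _ => some i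
  | _ => none

lemma adj_cOf {x y : BPV t n B a} (h : (bpGraph t n B a).Adj x y)
    (hx : ¬ isWv x) (hy : ¬ isWv y) : cOf x = cOf y := by
  rw [bpGraph, SimpleGraph.fromRel_adj] at h
  obtain ⟨-, h | h⟩ := h <;> cases x <;> cases y <;> simp_all [bpRel, isWv, cOf]

lemma walk_cOf {x y : BPV t n B a} (p : (bpGraph t n B a).Walk x y)
    (h : ∀ z ∈ p.support, ¬ isWv z) : cOf x = cOf y := by
  induction p with
  | nil => rfl
  | cons hadj q ih =>
    rw [SimpleGraph.Walk.support_cons] at h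
    have h1 := h _ List.mem_cons_self
    have h2 : ∀ z ∈ q.support, ¬ isWv z := fun z hz => h z (List.mem_cons_of_mem _ hz)
    exact (adj_cOf hadj h1 (h2 _ q.start_mem_support)).trans (ih h2)

lemma pendant_step {x y : BPV t n B a} (hx : fBP x = 0) (hne : x ≠ y)
    (p : (bpGraph t n B a).Walk x y) : ∃ z ∈ p.support, 0 < fBP z := by
  cases p with
  | nil => exact absurd rfl hne
  | cons hadj q =>
    rename_i b
    refine ⟨b, ?_, ?_⟩
    · rw [SimpleGraph.Walk.support_cons]
      exact List.mem_cons_of_mem _ q.start_mem_support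
    · rw [bpGraph, SimpleGraph.fromRel_adj] at hadj
      obtain ⟨-, h | h⟩ := hadj <;> cases x <;> cases b <;>
        simp_all [bpRel, fBP]

lemma rank_prop (x y : BPV t n B a) (hne : x ≠ y) (hf : fBP x = fBP y)
    (p : (bpGraph t n B a).Walk x y) : ∃ z ∈ p.support, fBP x < fBP z := by
  by_cases h0 : fBP x = 0
  · obtain ⟨z, hz, hz'⟩ := pendant_step h0 hne p
    exact ⟨z, hz, by omega⟩
  cases x with
  | u i =>
    cases y with
    | u i' =>
      by_contra hcon
      push_neg at hcon
      have hnw : ∀ z ∈ p.support, ¬ isWv z := by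
        intro z hz hw
        have := hcon z hz
        cases z <;> simp_all [isWv, fBP]
      have := walk_cOf p hnw
      simp only [cOf, Option.some.injEq] at this
      exact hne (by rw [this])
    | w j' => simp [fBP] at hf
    | p i' x' => simp [fBP] at hf
    | q j' y' => simp [fBP] at hf
  | w j =>
    cases y with
    | u i' => simp [fBP] at hf
    | w j' =>
      simp only [fBP] at hf
      exact absurd (by ext; omega : j = j') (fun h => hne (by rw [h]))
    | p i' x' => simp [fBP] at hf
    | q j' y' => simp [fBP] at hf
  | p i x' => simp [fBP] at h0
  | q j y' => simp [fBP] at h0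

end BP

/-- The treedepth of the bin-packing reduction graph is at most `t + 2`. -/
theorem stmt_11 (t n B : ℕ) (ht : 0 < t) (hn : 0 < n) (hB : 0 < B)
    (a : Fin n → ℕ) (ha : ∀ i, 0 < a i) (hsum : ∑ i, a i = t * B) :
    treedepth (bpGraph t n B a) ≤ t + 2 := by
  rw [treedepth]
  apply td_ranking (bpGraph t n B a) fBP (t + 2) Finset.univ
  · intro v _
    cases v with
    | u i => simp [fBP]
    | w j => simp only [fBP]; have := j.isLt; omega
    | p i x => simp [fBP]
    | q j y => simp [fBP]
  · intro x y _ _ hne hf p _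
    exact rank_prop x y hne hf p
end

section
/- Fix positive integers t, n, B and positive integers a_1, …, a_n with Σ_{i∈[n]} a_i = tB, and let G be the bin-packing reduction graph for these data. If V_1, …, V_t is a partition of V(G) such that for every j ∈ [t] the induced subgraph G[V_j] is connected and |V_j| = 3B, then each part V_j contains exactly one vertex of W = {w_1, …, w_t}. -/
/-!
A pendant vertex `q j y` has `w j` as its only neighbour, so a connected part with at least
two vertices containing it must contain `w j` too. Hence the part of `w j` contains its
whole star `{w j} ∪ {q j y}` of `2B` vertices, and a part of `3B` vertices cannot contain two
disjoint stars. So the `t` vertices `w j` lie in pairwise distinct parts among the `t` parts,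
and by pigeonhole every part gets exactly one of them.
-/

open Finset

theorem SimpleGraph.mem_of_induce_preconnected {V : Type*} {G : SimpleGraph V} {s : Set V}
    (hc : (G.induce s).Preconnected) (hs : s.Nontrivial) {x y : V} (hx : x ∈ s)
    (hxy : ∀ z, G.Adj x z → z = y) : y ∈ s := by
  have : Nontrivial s := Set.nontrivial_coe_sort.mpr hs
  obtain ⟨z, hz⟩ := hc.exists_adj_of_nontrivial ⟨x, hx⟩
  exact hxy z hz ▸ z.2

theorem existsUnique_mem_and_mem_range {ι V : Type*} [Finite ι] {P : ι → Set V}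
    (hpart : ∀ x, ∃! j, x ∈ P j) {w : ι → V}
    (hw : ∀ k j j', w j ∈ P k → w j' ∈ P k → j = j') (k : ι) :
    ∃! x, x ∈ P k ∧ ∃ j, x = w j := by
  choose f hf _ using hpart
  have hinj : Function.Injective (f ∘ w) := fun j j' (h : f (w j) = f (w j')) =>
    hw _ j j' (hf (w j)) (h ▸ hf (w j'))
  obtain ⟨j, rfl⟩ := (Finite.injective_iff_surjective.mp hinj) k
  refine ⟨w j, ⟨hf (w j), j, rfl⟩, ?_⟩
  rintro _ ⟨hx, j', rfl⟩
  rw [hw _ j' j hx (hf (w j))]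

namespace BPV

variable {t n B : ℕ} {a : Fin n → ℕ}

theorem q_injective (j : Fin t) : Function.Injective (q (n := n) (B := B) (a := a) j) :=
  fun _ _ h => (q.inj h).2

theorem bpGraph_adj_q {j : Fin t} {y : Fin (2 * B - 1)} {z : BPV t n B a} :
    (bpGraph t n B a).Adj (q j y) z ↔ z = w j := by
  cases z <;> simp [bpGraph, bpRel, SimpleGraph.fromRel_adj, eq_comm]

def star (j : Fin t) : Finset (BPV t n B a) :=
  insert (w j) (univ.image (q j))

theorem card_star (hB : 0 < B) (j : Fin t) : (star j : Finset (BPV t n B a)).card = 2 * B := by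
  rw [star, card_insert_of_notMem (by simp), card_image_of_injective _ (q_injective j),
    card_univ, Fintype.card_fin]
  omega

theorem disjoint_star {j j' : Fin t} (h : j ≠ j') :
    Disjoint (star j : Finset (BPV t n B a)) (star j') := by
  simp [star, disjoint_left, h, Ne.symm h]

end BPV

theorem stmt_14_general (t n B : ℕ) (hB : 0 < B)
    (a : Fin n → ℕ)
    (Vpart : Fin t → Finset (BPV t n B a))
    (hpart : ∀ x : BPV t n B a, ∃! j : Fin t, x ∈ Vpart j)
    (hconn : ∀ j : Fin t,
      ((bpGraph t n B a).induce (Vpart j : Set (BPV t n B a))).Connected)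
    (hcard : ∀ j : Fin t, (Vpart j).card = 3 * B) :
    ∀ j : Fin t, ∃! x : BPV t n B a,
      x ∈ Vpart j ∧ ∃ j' : Fin t, x = BPV.w j' := by
  have hw_of_q : ∀ j k y, BPV.q j y ∈ Vpart k → BPV.w j ∈ Vpart k := fun j k y hq =>
    SimpleGraph.mem_of_induce_preconnected (hconn k).preconnected
      (one_lt_card_iff_nontrivial.mp (by rw [hcard k]; omega)) hq fun _ => BPV.bpGraph_adj_q.mp
  have hstar : ∀ j k, BPV.w j ∈ Vpart k → BPV.star j ⊆ Vpart k := by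
    intro j k hw x hx
    obtain rfl | ⟨y, -, rfl⟩ := mem_insert.mp hx |>.imp_right mem_image.mp
    · exact hw
    obtain ⟨k', hk', -⟩ := hpart (BPV.q j y)
    rwa [(hpart (BPV.w j)).unique hw (hw_of_q j k' y hk')]
  refine existsUnique_mem_and_mem_range (P := fun k => (Vpart k : Set (BPV t n B a))) hpart ?_
  intro k j j' hj hj'
  by_contra hne
  have := card_le_card (union_subset (hstar j k hj) (hstar j' k hj'))
  rw [card_union_of_disjoint (BPV.disjoint_star hne), BPV.card_star hB, BPV.card_star hB,
    hcard] at this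
  omega

/-- If the vertices of the bin-packing reduction graph are partitioned into `t` parts,
each inducing a connected subgraph of exactly `3B` vertices, then each part contains
exactly one of the vertices `w 1, …, w t`. -/
theorem stmt_14 (t n B : ℕ) (ht : 0 < t) (hn : 0 < n) (hB : 0 < B)
    (a : Fin n → ℕ) (ha : ∀ i, 0 < a i) (hsum : ∑ i, a i = t * B)
    (Vpart : Fin t → Finset (BPV t n B a))
    (hpart : ∀ x : BPV t n B a, ∃! j : Fin t, x ∈ Vpart j)
    (hconn : ∀ j : Fin t,
      ((bpGraph t n B a).induce (Vpart j : Set (BPV t n B a))).Connected)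
    (hcard : ∀ j : Fin t, (Vpart j).card = 3 * B) :
    ∀ j : Fin t, ∃! x : BPV t n B a,
      x ∈ Vpart j ∧ ∃ j' : Fin t, x = BPV.w j' :=
  stmt_14_general t n B hB a Vpart hpart hconn hcard
end
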